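/- Let α be irrational, and let J_k(q) be the special intervals defined from the partition A_k(α) as above. If 1 ≤ q', q'' ≤ q_{k+1} − 2 are such that {q'α} and {q''α} are neighboring points of the partition A_k(α) with both points in (0, 1−α) or both in (1−α, 1), then the overlap satisfies length(J_k(q') ∩ J_k(q'')) ≥ ‖q_kα‖. -/

import Mathlib

/-- `q_k`: the denominators of the continued fraction convergents of `α`. -/
noncomputable def cfq (α : ℝ) (k : ℕ) : ℝ := (GenContFract.of α).dens k

/-- `a_k`: the continued fraction digits (partial quotients) of `α`, for `k ≥ 1`. -/
noncomputable def cfa (α : ℝ) (k : ℕ) : ℝ :=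
  ((GenContFract.of α).partDens.get? (k - 1)).getD 0

/-- `‖y‖`: the distance from `y` to the nearest integer. -/
noncomputable def nearestIntDist (y : ℝ) : ℝ := |y - round y|

/-!
Write `θ = q_k α - p_k` and `θ' = q_{k+1} α - p_{k+1}`. They have opposite signs,
`|θ'| < |θ| = ‖q_k α‖`, and `(q_k, p_k), (q_{k+1}, p_{k+1})` is a basis of `ℤ²`. For
`0 < |m| < q_{k+1}` the coordinates of `(m, n)` in this basis have opposite signs, so
`|m α - n| ≥ |θ|`, and even `≥ |θ| + |θ'|` unless `(m, n) = ±(q_k, p_k)`. Hence `d*, d** ≥ ‖q_k α‖`,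
and the one on the side towards which `θ` does not point is `≥ |θ| + |θ'|`.

Translating the left neighbour `{q'α}` by `±q_k`, or if that leaves the index range by
`±(q_k - q_{k+1})`, gives a partition point `|θ|`, resp. `|θ| + |θ'|`, to its right, which bounds
the gap to the right neighbour `{q''α}`. The overlap `d* + d** - gap` of the two intervals is
therefore at least `‖q_k α‖`.
-/

open GenContFract

noncomputable def cfp (α : ℝ) (n : ℕ) : ℝ := (GenContFract.of α).nums n

theorem exists_int_contsAux_eq {K : Type*} [Field K] [LinearOrder K] [FloorRing K]
    [IsStrictOrderedRing K] (v : K) (n : ℕ) :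
    ∃ p q : ℤ, (GenContFract.of v).contsAux n = ⟨(p : K), (q : K)⟩ := by
  induction n using Nat.twoStepInduction with
  | zero => exact ⟨1, 0, by simp [zeroth_contAux_eq_one_zero]⟩
  | one => exact ⟨⌊v⌋, 1, by simp [first_contAux_eq_h_one, of_h_eq_floor]⟩
  | more n ih₀ ih₁ =>
    obtain ⟨p₀, q₀, h₀⟩ := ih₀
    obtain ⟨p₁, q₁, h₁⟩ := ih₁
    cases hs : (GenContFract.of v).s.get? n with
    | none => exact ⟨p₁, q₁, (contsAux_stable_step_of_terminated hs).trans h₁⟩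
    | some gp =>
      obtain ⟨ha, z, hb⟩ := of_partNum_eq_one_and_exists_int_partDen_eq hs
      refine ⟨z * p₁ + p₀, z * q₁ + q₀, ?_⟩
      rw [contsAux_recurrence hs h₀ h₁, ha, hb]
      push_cast
      ring_nf

theorem exists_int_cfp_cfq (α : ℝ) (n : ℕ) : ∃ p q : ℤ, cfp α n = p ∧ cfq α n = q := by
  obtain ⟨p, q, h⟩ := exists_int_contsAux_eq α (n + 1)
  refine ⟨p, q, ?_, ?_⟩
  · rw [cfp, num_eq_conts_a, nth_cont_eq_succ_nth_contAux, h]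
  · rw [cfq, den_eq_conts_b, nth_cont_eq_succ_nth_contAux, h]

theorem not_terminatedAt_of_irrational {α : ℝ} (hα : Irrational α) (n : ℕ) :
    ¬(GenContFract.of α).TerminatedAt n := fun h ↦
  let ⟨q, hq⟩ := (terminates_iff_rat α).mp ⟨n, h⟩
  hα ⟨q, hq.symm⟩

theorem fib_succ_le_cfq {α : ℝ} (hα : Irrational α) (n : ℕ) : (Nat.fib (n + 1) : ℝ) ≤ cfq α n :=
  succ_nth_fib_le_of_nth_den (Or.inr (not_terminatedAt_of_irrational hα _))

theorem cfq_pos {α : ℝ} (hα : Irrational α) (n : ℕ) : 0 < cfq α n :=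
  lt_of_lt_of_le (by exact_mod_cast Nat.fib_pos.mpr n.succ_pos) (fib_succ_le_cfq hα n)

theorem two_le_cfq {α : ℝ} (hα : Irrational α) {n : ℕ} (hn : 2 ≤ n) : 2 ≤ cfq α n :=
  le_trans (by exact_mod_cast Nat.fib_mono (show 3 ≤ n + 1 by omega)) (fib_succ_le_cfq hα n)

theorem cfq_add_cfq_succ_le {α : ℝ} (hα : Irrational α) (n : ℕ) :
    cfq α n + cfq α (n + 1) ≤ cfq α (n + 2) := by
  obtain ⟨gp, hgp⟩ := Option.ne_none_iff_exists'.mp (not_terminatedAt_of_irrational hα (n + 1))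
  have ha : gp.a = 1 := (of_partNum_eq_one_and_exists_int_partDen_eq hgp).1
  have hb : 1 ≤ gp.b := of_one_le_get?_partDen (partDen_eq_s_b hgp)
  have hq : 0 ≤ (GenContFract.of α).dens (n + 1) := zero_le_of_den
  rw [cfq, cfq, cfq, dens_recurrence hgp rfl rfl, ha]
  nlinarith

theorem cfp_mul_cfq_succ_sub {α : ℝ} (hα : Irrational α) (n : ℕ) :
    cfp α n * cfq α (n + 1) - cfq α n * cfp α (n + 1) = (-1) ^ (n + 1) :=
  SimpContFract.determinant (s := SimpContFract.of α) (not_terminatedAt_of_irrational hα n)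

theorem neg_one_pow_mul_sub_convs_pos {α : ℝ} (hα : Irrational α) (n : ℕ) :
    0 < (-1 : ℝ) ^ n * (α - (GenContFract.of α).convs n) := by
  obtain ⟨ifp₁, hifp₁⟩ := Option.ne_none_iff_exists'.mp <|
    mt of_terminatedAt_n_iff_succ_nth_intFractPair_stream_eq_none.mpr
      (not_terminatedAt_of_irrational hα n)
  obtain ⟨ifp, hifp, hfr, -⟩ := IntFractPair.succ_nth_stream_eq_some_iff.mp hifp₁
  have hfr_pos : 0 < ifp.fr := (IntFractPair.nth_stream_fr_nonneg hifp).lt_of_ne' hfr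
  have hB : 0 < ((GenContFract.of α).contsAux (n + 1)).b := by
    rw [← nth_cont_eq_succ_nth_contAux, ← den_eq_conts_b]; exact cfq_pos hα n
  have hpB : 0 ≤ ((GenContFract.of α).contsAux n).b := zero_le_of_contsAux_b
  rw [sub_convs_eq hifp, if_neg hfr, mul_div_assoc', ← pow_add, ← two_mul, pow_mul, neg_one_sq,
    one_pow]
  positivity

theorem neg_one_pow_mul_cfq_mul_sub_cfp_pos {α : ℝ} (hα : Irrational α) (n : ℕ) :
    0 < (-1 : ℝ) ^ n * (cfq α n * α - cfp α n) := by
  have hq := cfq_pos hα n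
  have hconv : (GenContFract.of α).convs n = cfp α n / cfq α n := conv_eq_num_div_den
  have : cfq α n * α - cfp α n = cfq α n * (α - (GenContFract.of α).convs n) := by
    rw [hconv]; field_simp
  rw [this, mul_left_comm]
  exact mul_pos hq (neg_one_pow_mul_sub_convs_pos hα n)

theorem abs_eq_neg_one_pow_mul {x : ℝ} {n : ℕ} (h : 0 < (-1 : ℝ) ^ n * x) :
    |x| = (-1) ^ n * x := by
  rw [← abs_of_pos h, abs_mul, abs_pow, abs_neg, abs_one, one_pow, one_mul]

theorem cfq_succ_mul_abs_add_cfq_mul_abs {α : ℝ} (hα : Irrational α) (n : ℕ) :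
    cfq α (n + 1) * |cfq α n * α - cfp α n| +
      cfq α n * |cfq α (n + 1) * α - cfp α (n + 1)| = 1 := by
  rw [abs_eq_neg_one_pow_mul (neg_one_pow_mul_cfq_mul_sub_cfp_pos hα n),
    abs_eq_neg_one_pow_mul (neg_one_pow_mul_cfq_mul_sub_cfp_pos hα (n + 1))]
  have hsq : (-1 : ℝ) ^ n * (-1) ^ n = 1 := by rw [← mul_pow]; norm_num
  linear_combination (-(-1 : ℝ) ^ n) * cfp_mul_cfq_succ_sub hα n + hsq

theorem abs_cfq_succ_mul_sub_lt {α : ℝ} (hα : Irrational α) (n : ℕ) :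
    |cfq α (n + 1) * α - cfp α (n + 1)| < |cfq α n * α - cfp α n| := by
  have h₀ := cfq_succ_mul_abs_add_cfq_mul_abs hα n
  have h₁ := cfq_succ_mul_abs_add_cfq_mul_abs hα (n + 1)
  have hsum := cfq_add_cfq_succ_le hα n
  have hq₁ := cfq_pos hα (n + 1)
  have hθ₂ := neg_one_pow_mul_cfq_mul_sub_cfp_pos hα (n + 2)
  rw [← abs_eq_neg_one_pow_mul hθ₂] at hθ₂
  refine lt_of_mul_lt_mul_left (a := cfq α (n + 1)) ?_ hq₁.le
  nlinarith [mul_pos hq₁ hθ₂,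
    mul_le_mul_of_nonneg_right hsum (abs_nonneg (cfq α (n + 1) * α - cfp α (n + 1)))]

theorem cfq_mul_sub_cfp_mul_succ_neg {α : ℝ} (hα : Irrational α) (n : ℕ) :
    (cfq α n * α - cfp α n) * (cfq α (n + 1) * α - cfp α (n + 1)) < 0 := by
  have h₀ := neg_one_pow_mul_cfq_mul_sub_cfp_pos hα n
  have h₁ := neg_one_pow_mul_cfq_mul_sub_cfp_pos hα (n + 1)
  have hsq : (-1 : ℝ) ^ n * (-1) ^ n = 1 := by rw [← mul_pow]; norm_num
  rw [pow_succ] at h₁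
  nlinarith [mul_pos h₀ h₁]

theorem exists_int_consecutive_convergents {α : ℝ} (hα : Irrational α) {k : ℕ} (hk : 1 ≤ k) :
    ∃ p q p₁ q₁ : ℤ, cfq α k = q ∧ cfq α (k + 1) = q₁ ∧ IsUnit (p * q₁ - q * p₁) ∧ 0 < q ∧
      q ≤ q₁ ∧ ((q : ℝ) * α - p) * ((q₁ : ℝ) * α - p₁) < 0 ∧
      |(q₁ : ℝ) * α - p₁| ≤ |(q : ℝ) * α - p| ∧ (2 ≤ q ∨ (q : ℝ) * α - p < 0) := by
  obtain ⟨p, q, hp, hq⟩ := exists_int_cfp_cfq α k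
  obtain ⟨p₁, q₁, hp₁, hq₁⟩ := exists_int_cfp_cfq α (k + 1)
  have hdet := cfp_mul_cfq_succ_sub hα k
  have hsign := cfq_mul_sub_cfp_mul_succ_neg hα k
  have hlt := abs_cfq_succ_mul_sub_lt hα k
  have hpos := cfq_pos hα k
  have hmono : cfq α k ≤ cfq α (k + 1) := of_den_mono
  have hθ := neg_one_pow_mul_cfq_mul_sub_cfp_pos hα k
  simp only [hp, hq, hp₁, hq₁] at hdet hsign hlt hpos hmono hθ
  refine ⟨p, q, p₁, q₁, hq, hq₁, ?_, by exact_mod_cast hpos, by exact_mod_cast hmono, hsign,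
    hlt.le, ?_⟩
  · have hd : ((p * q₁ - q * p₁ : ℤ) : ℝ) * ((p * q₁ - q * p₁ : ℤ) : ℝ) = 1 := by
      push_cast; rw [hdet, ← mul_pow]; norm_num
    exact IsUnit.of_mul_eq_one _ (by exact_mod_cast hd)
  · rcases Nat.even_or_odd k with heven | hodd
    · have h2 := two_le_cfq hα (n := k) (by obtain ⟨j, rfl⟩ := heven; omega)
      rw [hq] at h2
      exact Or.inl (by exact_mod_cast h2)
    · rw [hodd.neg_one_pow] at hθ
      exact Or.inr (by linarith)

theorem abs_mul_add_mul_of_mul_nonpos {x y a b : ℝ} (hxy : x * y ≤ 0) (hab : a * b < 0) :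
    |x * a + y * b| = |x| * |a| + |y| * |b| := by
  have h : 0 ≤ (x * a) * (y * b) := by nlinarith [mul_nonneg_of_nonpos_of_nonpos hxy hab.le]
  rw [(abs_add_eq_add_abs_iff _ _).mpr (mul_nonneg_iff.mp h), abs_mul, abs_mul]

section Lattice

variable {α : ℝ} {q p q₁ p₁ : ℤ}

theorem exists_coords_of_isUnit (hdet : IsUnit (p * q₁ - q * p₁)) (hq : 0 ≤ q) {m n : ℤ}
    (hm₀ : m ≠ 0) (hm : |m| < q₁) :
    ∃ x y : ℤ, x ≠ 0 ∧ x * y ≤ 0 ∧ m = x * q + y * q₁ ∧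
      (m : ℝ) * α - n = x * ((q : ℝ) * α - p) + y * ((q₁ : ℝ) * α - p₁) := by
  have hd := Int.isUnit_mul_self hdet
  -- Cramer's rule, with the determinant its own inverse
  obtain ⟨x, y, rfl, rfl⟩ : ∃ x y : ℤ, m = x * q + y * q₁ ∧ n = x * p + y * p₁ :=
    ⟨(p * q₁ - q * p₁) * (n * q₁ - m * p₁), (p * q₁ - q * p₁) * (m * p - n * q),
      by linear_combination (-m) * hd, by linear_combination (-n) * hd⟩
  obtain ⟨hm_lo, hm_hi⟩ := abs_lt.mp hm
  have hxy : x * y ≤ 0 := by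
    -- coordinates of equal sign would give `|m| ≥ q₁`
    by_contra! h
    rcases pos_and_pos_or_neg_and_neg_of_mul_pos h with ⟨hx, hy⟩ | ⟨hx, hy⟩ <;> nlinarith
  have hx : x ≠ 0 := by
    rintro rfl
    rcases lt_trichotomy y 0 with hy | rfl | hy
    · nlinarith
    · exact hm₀ (by ring)
    · nlinarith
  exact ⟨x, y, hx, hxy, rfl, by push_cast; ring⟩

theorem abs_mul_sub_le_abs_mul_sub (hdet : IsUnit (p * q₁ - q * p₁)) (hq : 0 ≤ q)
    (hsign : ((q : ℝ) * α - p) * ((q₁ : ℝ) * α - p₁) < 0) {m n : ℤ} (hm₀ : m ≠ 0)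
    (hm : |m| < q₁) :
    |(q : ℝ) * α - p| ≤ |(m : ℝ) * α - n| := by
  obtain ⟨x, y, hx, hxy, -, hmn⟩ := exists_coords_of_isUnit (α := α) (n := n) hdet hq hm₀ hm
  rw [hmn, abs_mul_add_mul_of_mul_nonpos (by exact_mod_cast hxy) hsign]
  have hx₁ : (1 : ℝ) ≤ |(x : ℝ)| := by exact_mod_cast Int.one_le_abs hx
  nlinarith [abs_nonneg (y : ℝ), abs_nonneg ((q₁ : ℝ) * α - p₁), abs_nonneg ((q : ℝ) * α - p)]

theorem abs_add_abs_le_abs_mul_sub (hdet : IsUnit (p * q₁ - q * p₁)) (hq : 0 ≤ q)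
    (hsign : ((q : ℝ) * α - p) * ((q₁ : ℝ) * α - p₁) < 0)
    (hle : |(q₁ : ℝ) * α - p₁| ≤ |(q : ℝ) * α - p|) {m n : ℤ} (hm₀ : m ≠ 0) (hm : |m| < q₁)
    (hmq : m ≠ -q) (hopp : ((m : ℝ) * α - n) * ((q : ℝ) * α - p) < 0) :
    |(q : ℝ) * α - p| + |(q₁ : ℝ) * α - p₁| ≤ |(m : ℝ) * α - n| := by
  obtain ⟨x, y, hx, hxy, hmxy, hmn⟩ := exists_coords_of_isUnit (α := α) (n := n) hdet hq hm₀ hm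
  rw [hmn, abs_mul_add_mul_of_mul_nonpos (by exact_mod_cast hxy) hsign]
  rcases eq_or_ne y 0 with rfl | hy
  · -- `m α - n = x (q α - p)` has the sign opposite to `q α - p`, which forces `x ≤ -2`
    rw [hmn] at hopp
    simp only [Int.cast_zero, zero_mul, add_zero, abs_zero] at hopp hmxy ⊢
    have hx_neg : x < 0 := by
      by_contra! hx0
      nlinarith [mul_nonneg (show (0 : ℝ) ≤ x by exact_mod_cast hx0)
        (mul_self_nonneg ((q : ℝ) * α - p))]
    have hx₂ : (2 : ℝ) ≤ |(x : ℝ)| := by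
      rw [abs_of_neg (by exact_mod_cast hx_neg)]
      have : x ≠ -1 := by rintro rfl; exact hmq (by simpa using hmxy)
      have : x ≤ -2 := by omega
      have : (x : ℝ) ≤ -2 := by exact_mod_cast this
      linarith
    nlinarith [abs_nonneg ((q : ℝ) * α - p)]
  · have hx₁ : (1 : ℝ) ≤ |(x : ℝ)| := by exact_mod_cast Int.one_le_abs hx
    have hy₁ : (1 : ℝ) ≤ |(y : ℝ)| := by exact_mod_cast Int.one_le_abs hy
    nlinarith [abs_nonneg ((q₁ : ℝ) * α - p₁), abs_nonneg ((q : ℝ) * α - p)]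

end Lattice

theorem abs_sub_floor_eq_fract (x : ℝ) : |x - ⌊x⌋| = Int.fract x := by
  rw [Int.self_sub_floor, abs_of_nonneg (Int.fract_nonneg x)]

theorem abs_sub_floor_add_one_eq (x : ℝ) : |x - ((⌊x⌋ + 1 : ℤ) : ℝ)| = 1 - Int.fract x := by
  rw [Int.cast_add, Int.cast_one, ← sub_sub, Int.self_sub_floor,
    abs_of_neg (by linarith [Int.fract_lt_one x]), neg_sub]

theorem fract_sub_fract_le_of_eq {α c : ℝ} {a b m z : ℤ} (hc : 0 < c)
    (hmα : (m : ℝ) * α = a * α + c + z)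
    (hm : Int.fract ((m : ℝ) * α) ∉ Set.Ioo (Int.fract ((a : ℝ) * α)) (Int.fract ((b : ℝ) * α))) :
    Int.fract ((b : ℝ) * α) - Int.fract ((a : ℝ) * α) ≤ c := by
  by_contra! hlt
  have hfm : Int.fract ((m : ℝ) * α) = Int.fract ((a : ℝ) * α) + c := by
    rw [Int.fract_eq_iff]
    refine ⟨by linarith [Int.fract_nonneg ((a : ℝ) * α)],
      by linarith [Int.fract_lt_one ((b : ℝ) * α)], z + ⌊(a : ℝ) * α⌋, ?_⟩
    rw [hmα, ← Int.self_sub_floor]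
    push_cast
    ring
  exact hm (hfm ▸ ⟨by linarith, by linarith⟩)

section NeighborGap

variable {α : ℝ} {q p q₁ p₁ a b s t : ℤ}

theorem abs_mul_sub_le_fract_and_one_sub (hdet : IsUnit (p * q₁ - q * p₁)) (hq : 0 ≤ q)
    (hsign : ((q : ℝ) * α - p) * ((q₁ : ℝ) * α - p₁) < 0) (hs₀ : s ≠ 0) (hs : |s| < q₁) :
    |(q : ℝ) * α - p| ≤ Int.fract ((s : ℝ) * α) ∧
      |(q : ℝ) * α - p| ≤ 1 - Int.fract ((s : ℝ) * α) :=
  ⟨abs_sub_floor_eq_fract ((s : ℝ) * α) ▸ abs_mul_sub_le_abs_mul_sub hdet hq hsign hs₀ hs,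
    abs_sub_floor_add_one_eq ((s : ℝ) * α) ▸ abs_mul_sub_le_abs_mul_sub hdet hq hsign hs₀ hs⟩

theorem add_fract_sub_fract_le_of_pos (hdet : IsUnit (p * q₁ - q * p₁)) (hq : 2 ≤ q)
    (hqq₁ : q ≤ q₁) (hsign : ((q : ℝ) * α - p) * ((q₁ : ℝ) * α - p₁) < 0)
    (hle : |(q₁ : ℝ) * α - p₁| ≤ |(q : ℝ) * α - p|) (hθ : 0 < (q : ℝ) * α - p)
    (ha₀ : 0 ≤ a) (ha : a ≤ q₁ - 2) (hs₀ : s ≠ 0) (hs : -1 ≤ s ∧ s ≤ q₁ - 2)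
    (ht₀ : t ≠ 0) (ht : -1 ≤ t ∧ t ≤ q₁ - 2)
    (hnb : ∀ m : ℤ, -1 ≤ m → m ≤ q₁ - 2 →
      Int.fract ((m : ℝ) * α) ∉ Set.Ioo (Int.fract ((a : ℝ) * α)) (Int.fract ((b : ℝ) * α))) :
    |(q : ℝ) * α - p| + (Int.fract ((b : ℝ) * α) - Int.fract ((a : ℝ) * α)) ≤
      Int.fract ((s : ℝ) * α) + (1 - Int.fract ((t : ℝ) * α)) := by
  have hθ₁ : (q₁ : ℝ) * α - p₁ < 0 := neg_of_mul_neg_right hsign hθ.le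
  have hs_lt : |s| < q₁ := abs_lt.mpr ⟨by omega, by omega⟩
  have ht_lt : |t| < q₁ := abs_lt.mpr ⟨by omega, by omega⟩
  have hs_le := (abs_mul_sub_le_fract_and_one_sub hdet (by omega) hsign hs₀ hs_lt).1
  have ht_le := (abs_mul_sub_le_fract_and_one_sub hdet (by omega) hsign ht₀ ht_lt).2
  rw [abs_of_pos hθ] at hs_le ht_le ⊢
  by_cases hshort : a + q ≤ q₁ - 2
  · have hgap := fract_sub_fract_le_of_eq (b := b) (m := a + q) (z := p) hθ (by push_cast; ring)
      (hnb _ (by omega) hshort)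
    linarith
  · have hgap := fract_sub_fract_le_of_eq (b := b) (m := a + q - q₁) (z := p - p₁)
      (c := (q : ℝ) * α - p + |(q₁ : ℝ) * α - p₁|) (by positivity)
      (by rw [abs_of_neg hθ₁]; push_cast; ring) (hnb _ (by omega) (by omega))
    have ht_le' : (q : ℝ) * α - p + |(q₁ : ℝ) * α - p₁| ≤ 1 - Int.fract ((t : ℝ) * α) := by
      rw [← abs_sub_floor_add_one_eq, ← abs_of_pos hθ]
      refine abs_add_abs_le_abs_mul_sub hdet (by omega) hsign hle ht₀ ht_lt (by omega)
        (mul_neg_of_neg_of_pos ?_ hθ)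
      push_cast
      linarith [Int.lt_floor_add_one ((t : ℝ) * α)]
    linarith

theorem add_fract_sub_fract_le_of_neg (hdet : IsUnit (p * q₁ - q * p₁)) (hq : 0 ≤ q)
    (hqq₁ : q ≤ q₁) (hsign : ((q : ℝ) * α - p) * ((q₁ : ℝ) * α - p₁) < 0)
    (hle : |(q₁ : ℝ) * α - p₁| ≤ |(q : ℝ) * α - p|) (hθ : (q : ℝ) * α - p < 0)
    (ha₀ : 0 ≤ a) (ha : a ≤ q₁ - 2) (hs₀ : s ≠ 0) (hs : -1 ≤ s ∧ s ≤ q₁ - 2)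
    (ht₀ : t ≠ 0) (ht : -1 ≤ t ∧ t ≤ q₁ - 2)
    (hnb : ∀ m : ℤ, -1 ≤ m → m ≤ q₁ - 2 →
      Int.fract ((m : ℝ) * α) ∉ Set.Ioo (Int.fract ((a : ℝ) * α)) (Int.fract ((b : ℝ) * α))) :
    |(q : ℝ) * α - p| + (Int.fract ((b : ℝ) * α) - Int.fract ((a : ℝ) * α)) ≤
      Int.fract ((s : ℝ) * α) + (1 - Int.fract ((t : ℝ) * α)) := by
  have hθ₁ : 0 < (q₁ : ℝ) * α - p₁ := pos_of_mul_neg_right hsign hθ.le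
  have hs_lt : |s| < q₁ := abs_lt.mpr ⟨by omega, by omega⟩
  have ht_lt : |t| < q₁ := abs_lt.mpr ⟨by omega, by omega⟩
  have hs_le := (abs_mul_sub_le_fract_and_one_sub hdet hq hsign hs₀ hs_lt).1
  have ht_le := (abs_mul_sub_le_fract_and_one_sub hdet hq hsign ht₀ ht_lt).2
  rw [abs_of_neg hθ] at hs_le ht_le ⊢
  by_cases hshort : -1 ≤ a - q
  · have hgap := fract_sub_fract_le_of_eq (b := b) (m := a - q) (z := -p) (neg_pos.mpr hθ)
      (by push_cast; ring) (hnb _ hshort (by omega))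
    linarith
  · have hgap := fract_sub_fract_le_of_eq (b := b) (m := a - q + q₁) (z := p₁ - p)
      (c := -((q : ℝ) * α - p) + |(q₁ : ℝ) * α - p₁|)
      (by linarith [abs_nonneg ((q₁ : ℝ) * α - p₁)])
      (by rw [abs_of_pos hθ₁]; push_cast; ring) (hnb _ (by omega) (by omega))
    have hs_le' : -((q : ℝ) * α - p) + |(q₁ : ℝ) * α - p₁| ≤ Int.fract ((s : ℝ) * α) := by
      rw [← abs_sub_floor_eq_fract, ← abs_of_neg hθ]
      refine abs_add_abs_le_abs_mul_sub hdet hq hsign hle hs₀ hs_lt (by omega)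
        (mul_neg_of_pos_of_neg ?_ hθ)
      rw [Int.self_sub_floor]
      linarith
    linarith

theorem add_fract_sub_fract_le (hdet : IsUnit (p * q₁ - q * p₁)) (hq : 0 ≤ q)
    (hqq₁ : q ≤ q₁) (hsign : ((q : ℝ) * α - p) * ((q₁ : ℝ) * α - p₁) < 0)
    (hle : |(q₁ : ℝ) * α - p₁| ≤ |(q : ℝ) * α - p|) (hq₂ : 2 ≤ q ∨ (q : ℝ) * α - p < 0)
    (ha₀ : 0 ≤ a) (ha : a ≤ q₁ - 2) (hs₀ : s ≠ 0) (hs : -1 ≤ s ∧ s ≤ q₁ - 2)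
    (ht₀ : t ≠ 0) (ht : -1 ≤ t ∧ t ≤ q₁ - 2)
    (hnb : ∀ m : ℤ, -1 ≤ m → m ≤ q₁ - 2 →
      Int.fract ((m : ℝ) * α) ∉ Set.Ioo (Int.fract ((a : ℝ) * α)) (Int.fract ((b : ℝ) * α))) :
    |(q : ℝ) * α - p| + (Int.fract ((b : ℝ) * α) - Int.fract ((a : ℝ) * α)) ≤
      Int.fract ((s : ℝ) * α) + (1 - Int.fract ((t : ℝ) * α)) := by
  rcases lt_or_gt_of_ne (left_ne_zero_of_mul hsign.ne) with hθ | hθ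
  · exact add_fract_sub_fract_le_of_neg hdet hq hqq₁ hsign hle hθ ha₀ ha hs₀ hs ht₀ ht hnb
  · exact add_fract_sub_fract_le_of_pos hdet (hq₂.resolve_right hθ.not_gt) hqq₁ hsign hle hθ ha₀ ha
      hs₀ hs ht₀ ht hnb

end NeighborGap

theorem volume_Ico_inter_Ico_of_le {x y d e : ℝ} (hxy : x ≤ y) :
    MeasureTheory.volume (Set.Ico (x - d) (x + e) ∩ Set.Ico (y - d) (y + e)) =
      ENNReal.ofReal (d + e - (y - x)) := by
  rw [Set.Ico_inter_Ico, sup_eq_right.mpr (by linarith), inf_eq_left.mpr (by linarith),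
    Real.volume_Ico]
  ring_nf

theorem stmt9 (α : ℝ) (hα : Irrational α)
    (k : ℕ) (hk : 1 ≤ k) (dst dss : ℝ)
    (hdss : IsLeast {x : ℝ | ∃ q : ℤ, -1 ≤ q ∧ (q : ℝ) ≤ cfq α (k + 1) - 2 ∧ q ≠ 0 ∧
      Int.fract ((q : ℝ) * α) = x} dss)
    (hdst : IsLeast {x : ℝ | ∃ q : ℤ, -1 ≤ q ∧ (q : ℝ) ≤ cfq α (k + 1) - 2 ∧ q ≠ 0 ∧
      1 - Int.fract ((q : ℝ) * α) = x} dst)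
    (q' q'' : ℤ) (hq'1 : 1 ≤ q') (hq'2 : (q' : ℝ) ≤ cfq α (k + 1) - 2)
    (horder : Int.fract ((q' : ℝ) * α) < Int.fract ((q'' : ℝ) * α))
    (hneighbor : ∀ q : ℤ, -1 ≤ q → (q : ℝ) ≤ cfq α (k + 1) - 2 →
      Int.fract ((q : ℝ) * α) ∉ Set.Ioo (Int.fract ((q' : ℝ) * α)) (Int.fract ((q'' : ℝ) * α))) :
    ENNReal.ofReal (nearestIntDist (cfq α k * α)) ≤
      MeasureTheory.volume
        (Set.Ico (Int.fract ((q' : ℝ) * α) - dss) (Int.fract ((q' : ℝ) * α) + dst) ∩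
          Set.Ico (Int.fract ((q'' : ℝ) * α) - dss) (Int.fract ((q'' : ℝ) * α) + dst)) := by
  obtain ⟨p, q, p₁, q₁, hq, hq₁, hdet, hq₀, hqq₁, hsign, hle, hq₂⟩ :=
    exists_int_consecutive_convergents hα hk
  rw [hq₁] at hdss hdst hq'2 hneighbor
  obtain ⟨s, hs₁, hs₂, hs₀, rfl⟩ := hdss.1
  obtain ⟨t, ht₁, ht₂, ht₀, rfl⟩ := hdst.1
  have hgap := add_fract_sub_fract_le (b := q'') hdet hq₀.le hqq₁ hsign hle hq₂ (by omega)
    (by exact_mod_cast hq'2) hs₀ ⟨hs₁, by exact_mod_cast hs₂⟩ ht₀ ⟨ht₁, by exact_mod_cast ht₂⟩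
    fun m hm₁ hm₂ ↦ hneighbor m hm₁ (by exact_mod_cast hm₂)
  have hdist : nearestIntDist (cfq α k * α) ≤ |(q : ℝ) * α - p| := hq ▸ round_le _ p
  rw [volume_Ico_inter_Ico_of_le horder.le]
  exact ENNReal.ofReal_le_ofReal (by linarith)
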